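/- For all integers t ≥ 2 and ω with (t + 1)/2 ≤ ω ≤ t and ω ≥ 2, there exists a finite simple graph G of treewidth exactly t and clique number exactly ω satisfying χ_f(G) ≥ t + 1 − Σ_{i=1}^{t−ω+1} 1/(ω − i + 1). -/

import Mathlib

/-!
The witness is `K_{t,t} ⊔ gadget (t - ω + 1) (2ω - t - 1)`, where the gadget iterates one step:
given `H`, take `n` pairwise adjacent cores and a hub, and for every core a copy of `H` joined to
that core and to the hub. The step raises the clique number by one and the treewidth by two: a copy
of `H`, enlarged by its core and the hub, is glued onto the clique formed by the cores and the hub.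
It turns a fractional clique of `H` into one that is heavier by `2 - 1/n`: weight `1 - 1/n` on
the hub, `1/n` on every core and `1/n` times the old weights on every copy. A fractional clique
bounds the fractional chromatic number from below, and `K_{t,t}` forces treewidth at least `t`.
-/

open MeasureTheory ENNReal

/-- `H` (a graph on vertex set `Fin n`) is a `t`-tree, witnessed by the natural ordering of
`Fin n`: the first `t` vertices form a clique, and every later vertex has a backward
neighborhood that is a clique on exactly `t` vertices. -/
def IsTTree (t n : ℕ) (H : SimpleGraph (Fin n)) : Prop :=
  t ≤ n ∧
  (∀ i j : Fin n, (i : ℕ) < t → (j : ℕ) < t → i ≠ j → H.Adj i j) ∧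
  ∀ i : Fin n, t ≤ (i : ℕ) →
    H.IsClique {j : Fin n | j < i ∧ H.Adj i j} ∧ {j : Fin n | j < i ∧ H.Adj i j}.ncard = t

/-- `G` has treewidth at most `t`, i.e. `G` is a partial `t`-tree: a subgraph of some `t`-tree. -/
def TreewidthAtMost {V : Type} (G : SimpleGraph V) (t : ℕ) : Prop :=
  ∃ (n : ℕ) (H : SimpleGraph (Fin n)) (f : V → Fin n),
    IsTTree t n H ∧ Function.Injective f ∧ ∀ u v : V, G.Adj u v → H.Adj (f u) (f v)

/-- A fractional coloring of `G`: each vertex gets a measurable subset of `ℝ` of Lebesgue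
measure `1`, with adjacent vertices receiving disjoint sets. -/
def IsFracColoring {V : Type} (G : SimpleGraph V) (φ : V → Set ℝ) : Prop :=
  (∀ v, MeasurableSet (φ v)) ∧ (∀ v, volume (φ v) = 1) ∧
  ∀ u v : V, G.Adj u v → φ u ∩ φ v = ∅

/-- The fractional chromatic number of `G`: the infimum over all fractional colorings of the
Lebesgue measure of the union of all color sets. -/
noncomputable def fracChromNum {V : Type} (G : SimpleGraph V) : ℝ≥0∞ :=
  ⨅ (φ : V → Set ℝ) (_ : IsFracColoring G φ), volume (⋃ v : V, φ v)

open Finset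

namespace SimpleGraph

variable {V W : Type} {G : SimpleGraph V} {H : SimpleGraph W} {p : ℕ} {w : V → ℝ}

lemma cliqueFree_of_card_le (h : ∀ S : Finset V, G.IsClique (S : Set V) → #S ≤ p) :
    G.CliqueFree (p + 1) := fun S hS => by
  have := h S hS.1
  rw [hS.2] at this
  omega

lemma card_le_of_isClique_sum (hG : ∀ S : Finset V, G.IsClique (S : Set V) → #S ≤ p)
    (hH : ∀ S : Finset W, H.IsClique (S : Set W) → #S ≤ p) (S : Finset (V ⊕ W))
    (hS : (G ⊕g H).IsClique (S : Set (V ⊕ W))) : #S ≤ p := by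
  have hleft : G.IsClique (S.toLeft : Set V) := fun a ha b hb hab =>
    sum_adj_inl.1 (hS (mem_toLeft.1 ha) (mem_toLeft.1 hb) (by simpa using hab))
  have hright : H.IsClique (S.toRight : Set W) := fun a ha b hb hab =>
    sum_adj_inr.1 (hS (mem_toRight.1 ha) (mem_toRight.1 hb) (by simpa using hab))
  rw [← card_toLeft_add_card_toRight]
  by_cases hl : S.toLeft = ∅
  · simpa [hl] using hH _ hright
  obtain ⟨a, ha⟩ := nonempty_iff_ne_empty.2 hl
  have hr : S.toRight = ∅ := eq_empty_of_forall_notMem fun b hb =>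
    not_adj_sum_inl_inr a b (hS (mem_toLeft.1 ha) (mem_toRight.1 hb) (by simp))
  simpa [hr] using hG _ hleft

def IsFracClique (G : SimpleGraph V) (w : V → ℝ) : Prop :=
  (∀ v, 0 ≤ w v) ∧ ∀ S : Finset V, G.IsIndepSet (S : Set V) → ∑ v ∈ S, w v ≤ 1

/-- The colour classes through a point of `ℝ` form an independent set, so at every point the
weights of the classes through it sum to at most `1`; integrate over `ℝ`. -/
theorem IsFracClique.ofReal_sum_le_volume [Fintype V] (hw : G.IsFracClique w) {φ : V → Set ℝ}
    (hφ : IsFracColoring G φ) : ENNReal.ofReal (∑ v, w v) ≤ volume (⋃ v, φ v) := by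
  classical
  obtain ⟨hmeas, hvol, hdisj⟩ := hφ
  have hpoint : ∀ x, ∑ v, (φ v).indicator (fun _ => ENNReal.ofReal (w v)) x ≤
      (⋃ v, φ v).indicator 1 x := by
    intro x
    by_cases hx : x ∈ ⋃ v, φ v
    · have hind : G.IsIndepSet (({v | x ∈ φ v} : Finset V) : Set V) := fun u hu v hv _ huv => by
        simp only [coe_filter, mem_univ, true_and, Set.mem_ofPred_eq] at hu hv
        exact (Set.eq_empty_iff_forall_notMem.1 (hdisj u v huv)) x ⟨hu, hv⟩
      rw [Set.indicator_of_mem hx, ← sum_filter_add_sum_filter_not univ (fun v => x ∈ φ v),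
        sum_congr rfl fun v hv => Set.indicator_of_mem (mem_filter.1 hv).2 _,
        sum_eq_zero fun v hv => Set.indicator_of_notMem (mem_filter.1 hv).2 _, add_zero,
        ← ENNReal.ofReal_sum_of_nonneg fun v _ => hw.1 v]
      exact ENNReal.ofReal_le_one.2 (hw.2 _ hind)
    · rw [Set.indicator_of_notMem hx]
      exact (sum_eq_zero fun v _ =>
        Set.indicator_of_notMem (fun h => hx (Set.mem_iUnion.2 ⟨v, h⟩)) _).le
  calc ENNReal.ofReal (∑ v, w v) = ∑ v, ENNReal.ofReal (w v) * volume (φ v) := by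
        simp [hvol, ENNReal.ofReal_sum_of_nonneg fun v _ => hw.1 v]
    _ = ∫⁻ x, ∑ v, (φ v).indicator (fun _ => ENNReal.ofReal (w v)) x := by
        rw [lintegral_finsetSum _ fun v _ => measurable_const.indicator (hmeas v)]
        simp [lintegral_indicator_const (hmeas _)]
    _ ≤ ∫⁻ x, (⋃ v, φ v).indicator 1 x := lintegral_mono hpoint
    _ = volume (⋃ v, φ v) := lintegral_indicator_one (MeasurableSet.iUnion hmeas)

theorem IsFracClique.ofReal_sum_le_fracChromNum [Fintype V] (hw : G.IsFracClique w) :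
    ENNReal.ofReal (∑ v, w v) ≤ fracChromNum G :=
  le_iInf₂ fun _ hφ => hw.ofReal_sum_le_volume hφ

theorem fracChromNum_le_of_hom {G' : SimpleGraph W} (f : G →g G') :
    fracChromNum G ≤ fracChromNum G' :=
  le_iInf₂ fun φ hφ => iInf₂_le_of_le (φ ∘ f)
    ⟨fun _ => hφ.1 _, fun _ => hφ.2.1 _, fun _ _ h => hφ.2.2 _ _ (f.map_rel h)⟩
    (measure_mono (Set.iUnion_subset fun v => Set.subset_iUnion φ (f v)))

lemma isFracClique_top (m : ℕ) : (⊤ : SimpleGraph (Fin m)).IsFracClique 1 := by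
  refine ⟨fun _ => zero_le_one, fun S hS => ?_⟩
  have : #S ≤ 1 := card_le_one.2 fun a ha b hb => by
    by_contra hab
    exact hS ha hb hab ((top_adj a b).2 hab)
  simpa using (Nat.cast_le (α := ℝ)).2 this

end SimpleGraph

theorem TreewidthAtMost.comap {V W : Type} {G : SimpleGraph V} {G' : SimpleGraph W} {t : ℕ}
    (h : G.IsContained G') (hG' : TreewidthAtMost G' t) : TreewidthAtMost G t := by
  obtain ⟨f⟩ := h
  obtain ⟨n, H, g, hH, hg, hadj⟩ := hG'
  exact ⟨n, H, g ∘ f, hH, hg.comp f.injective, fun u v huv => hadj _ _ (f.toHom.map_adj huv)⟩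

lemma IsTTree.card_le {t n : ℕ} {H : SimpleGraph (Fin n)} (hH : IsTTree t n H) (i : Fin n)
    {A : Finset (Fin n)} (hA : ∀ j ∈ A, j < i ∧ H.Adj i j) : #A ≤ t := by
  by_cases hi : (i : ℕ) < t
  · calc #A ≤ #(Iio i) := card_le_card fun j hj => mem_Iio.2 (hA j hj).1
      _ ≤ t := by rw [Fin.card_Iio]; exact hi.le
  · calc #A = (A : Set (Fin n)).ncard := (Set.ncard_coe_finset A).symm
      _ ≤ {j : Fin n | j < i ∧ H.Adj i j}.ncard := Set.ncard_le_ncard (fun j hj => hA j hj)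
      _ = t := (hH.2.2 i (not_lt.1 hi)).2

/-- In a partial `s`-tree take the last vertex of `K_{t,t}`: its `t` neighbours come before it. -/
theorem le_of_treewidthAtMost_completeBipartiteGraph {t s : ℕ}
    (h : TreewidthAtMost (completeBipartiteGraph (Fin t) (Fin t)) s) : t ≤ s := by
  obtain ⟨n, H, f, hH, hf, hadj⟩ := h
  rcases Nat.eq_zero_or_pos t with rfl | ht
  · exact Nat.zero_le s
  obtain ⟨x₀, -, hmax⟩ := exists_max_image univ f ⟨Sum.inl ⟨0, ht⟩, mem_univ _⟩
  obtain ⟨e, he, hx₀⟩ : ∃ e : Fin t → Fin t ⊕ Fin t, Function.Injective e ∧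
      ∀ y, (completeBipartiteGraph (Fin t) (Fin t)).Adj x₀ (e y) := by
    rcases x₀ with a | a
    exacts [⟨Sum.inr, Sum.inr_injective, by simp⟩, ⟨Sum.inl, Sum.inl_injective, by simp⟩]
  calc t = #(univ.image (f ∘ e)) := by rw [card_image_of_injective _ (hf.comp he), card_fin]
    _ ≤ s := hH.card_le (f x₀) fun j hj => by
      obtain ⟨y, -, rfl⟩ := mem_image.1 hj
      exact ⟨(hmax _ (mem_univ _)).lt_of_ne (hf.ne (hx₀ y).ne.symm), hadj _ _ (hx₀ y)⟩

/-- A `t`-tree on the positions `0, …, n - 1`: position `i` is joined to the set `B i` of earlier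
positions, a clique of size `min i t`. -/
structure TTreeLayout (t : ℕ) where
  n : ℕ
  B : ℕ → Finset ℕ
  lt_of_mem_B : ∀ i < n, ∀ j ∈ B i, j < i
  card_B : ∀ i < n, #(B i) = min i t
  mem_B_of_mem_B : ∀ i < n, ∀ j ∈ B i, ∀ j' ∈ B i, j < j' → j ∈ B j'

namespace TTreeLayout

section

variable {t : ℕ} (T : TTreeLayout t)

def Hosts {V : Type} (G : SimpleGraph V) (f : V → ℕ) : Prop :=
  Function.Injective f ∧ (∀ v, f v < T.n) ∧ ∀ u v, G.Adj u v → f u < f v → f u ∈ T.B (f v)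

def IsClique (K : Finset ℕ) : Prop :=
  ∀ j ∈ K, ∀ j' ∈ K, j < j' → j ∈ T.B j'

variable {T} in
lemma IsClique.subset {K K' : Finset ℕ} (h : T.IsClique K') (hK : K ⊆ K') : T.IsClique K :=
  fun j hj j' hj' => h j (hK hj) j' (hK hj')

lemma B_eq_range {i : ℕ} (hi : i < T.n) (hit : i ≤ t) : T.B i = range i :=
  eq_of_subset_of_card_le (fun j hj => mem_range.2 (T.lt_of_mem_B i hi j hj))
    (by rw [card_range, T.card_B i hi, min_eq_left hit])

lemma isClique_range (ht : t ≤ T.n) : T.IsClique (range t) := by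
  intro j _ j' hj' hjj'
  rw [mem_range] at hj'
  rw [T.B_eq_range (by omega) hj'.le]
  exact mem_range.2 hjj'

def graph : SimpleGraph (Fin T.n) := SimpleGraph.fromRel fun a b => (a : ℕ) ∈ T.B b

lemma graph_adj_iff_mem_B {a b : Fin T.n} (hab : a < b) : T.graph.Adj b a ↔ (a : ℕ) ∈ T.B b := by
  have hba : ¬ (b : ℕ) ∈ T.B a := fun h => absurd (T.lt_of_mem_B a a.2 b h) (by omega)
  simp only [graph, SimpleGraph.fromRel_adj, ne_eq]
  constructor
  · rintro ⟨-, h | h⟩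
    exacts [absurd h hba, h]
  · exact fun h => ⟨hab.ne', Or.inr h⟩

lemma graph_adj_of_mem_B {a b : Fin T.n} (h : (a : ℕ) ∈ T.B b) : T.graph.Adj a b :=
  (T.graph_adj_iff_mem_B (T.lt_of_mem_B b b.2 a h)).2 h |>.symm

lemma isTTree_graph (ht : t ≤ T.n) : IsTTree t T.n T.graph := by
  refine ⟨ht, fun i j hi hj hij => ?_, fun i hi => ?_⟩
  · rcases lt_or_gt_of_ne hij with h | h
    · exact T.graph_adj_of_mem_B (by rw [T.B_eq_range j.2 hj.le]; exact mem_range.2 h)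
    · exact (T.graph_adj_of_mem_B (by rw [T.B_eq_range i.2 hi.le]; exact mem_range.2 h)).symm
  have hback : {j : Fin T.n | j < i ∧ T.graph.Adj i j} = Fin.val ⁻¹' (T.B i : Set ℕ) := by
    ext j
    simp only [Set.mem_ofPred_eq, Set.mem_preimage, mem_coe]
    constructor
    · exact fun ⟨hji, h⟩ => (T.graph_adj_iff_mem_B hji).1 h
    · intro h
      have hji : j < i := T.lt_of_mem_B i i.2 j h
      exact ⟨hji, (T.graph_adj_iff_mem_B hji).2 h⟩
  rw [hback]
  refine ⟨fun a ha b hb hab => ?_, ?_⟩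
  · rcases lt_or_gt_of_ne hab with h | h
    · exact T.graph_adj_of_mem_B (T.mem_B_of_mem_B i i.2 a ha b hb h)
    · exact (T.graph_adj_of_mem_B (T.mem_B_of_mem_B i i.2 b hb a ha h)).symm
  · rw [Set.ncard_preimage_of_injective_subset_range Fin.val_injective, Set.ncard_coe_finset,
      T.card_B i i.2, min_eq_right hi]
    intro j hj
    exact ⟨⟨j, (T.lt_of_mem_B i i.2 j hj).trans i.2⟩, rfl⟩

end

variable {t t' : ℕ}

theorem Hosts.treewidthAtMost {T : TTreeLayout t} {V : Type} {G : SimpleGraph V}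
    {f : V → ℕ} (hf : T.Hosts G f) (ht : t ≤ T.n) : TreewidthAtMost G t := by
  obtain ⟨hinj, hlt, hadj⟩ := hf
  refine ⟨T.n, T.graph, fun v => ⟨f v, hlt v⟩, T.isTTree_graph ht,
    fun u v h => hinj (congrArg Fin.val h), fun u v huv => ?_⟩
  rcases lt_or_gt_of_ne (hinj.ne (G.ne_of_adj huv)) with h | h
  · exact T.graph_adj_of_mem_B (hadj u v huv h)
  · exact (T.graph_adj_of_mem_B (hadj v u huv.symm h)).symm

/-- The complete split graph `K_t + (n - t) K_1`, with the clique on the first `t` positions. -/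
def completeSplit (t n : ℕ) : TTreeLayout t where
  n := n
  B i := range (min i t)
  lt_of_mem_B i _ j hj := (mem_range.1 hj).trans_le (min_le_left i t)
  card_B i _ := card_range _
  mem_B_of_mem_B i _ j hj j' hj' hjj' := by
    simp only [mem_range, lt_min_iff] at hj hj' ⊢
    omega

lemma completeSplit_isClique_range (n : ℕ) : (completeSplit t n).IsClique (range (t + 1)) := by
  intro j _ j' hj' hjj'
  simp only [completeSplit, mem_range, lt_min_iff] at hj' ⊢
  omega

lemma completeSplit_hosts_of_card_le {V : Type} [Fintype V] (G : SimpleGraph V)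
    (h : Fintype.card V ≤ t + 1) :
    ∃ f, (completeSplit t (t + 1)).Hosts G f := by
  refine ⟨fun v => Fintype.equivFin V v, fun u v huv => (Fintype.equivFin V).injective
    (Fin.ext huv), fun v => (Fin.is_lt _).trans_le h, fun u v _ huv => ?_⟩
  have := (Fin.is_lt (Fintype.equivFin V v)).trans_le h
  simp only [completeSplit, mem_range, lt_min_iff] at huv ⊢
  omega

lemma completeSplit_hosts_completeBipartiteGraph (t : ℕ) :
    (completeSplit t (2 * t)).Hosts (completeBipartiteGraph (Fin t) (Fin t))
      (Sum.elim (fun a => a) (fun b => t + b)) := by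
  refine ⟨?_, ?_, ?_⟩
  · rintro (a | a) (b | b) h <;> simp only [Sum.elim_inl, Sum.elim_inr] at h <;> grind
  · rintro (a | a) <;> simp only [completeSplit, Sum.elim_inl, Sum.elim_inr] <;> omega
  · rintro (a | a) (b | b) h hab <;>
      simp_all [completeSplit]

def copyPos (T : TTreeLayout t) (L : TTreeLayout t') (c u : ℕ) : ℕ := T.n + (c * L.n + u)

/-- How to glue `m` copies of `L` onto `T`: vertex `u` of copy `c` is joined to its earlier
`L`-neighbours and to the clique `K c u` of `T`. -/
structure Gluing (T : TTreeLayout t) (L : TTreeLayout t') (m : ℕ) where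
  le_n : t ≤ T.n
  K : ℕ → ℕ → Finset ℕ
  lt_of_mem_K : ∀ c < m, ∀ u, ∀ j ∈ K c u, j < T.n
  isClique_K : ∀ c < m, ∀ u, T.IsClique (K c u)
  K_anti : ∀ c < m, ∀ u y, y < u → K c u ⊆ K c y
  card_K : ∀ c < m, ∀ u, #(K c u) + min u t' = t

variable {T : TTreeLayout t} {L : TTreeLayout t'}

lemma copyPos_div {c u : ℕ} (hu : u < L.n) : (c * L.n + u) / L.n = c := by
  rw [Nat.add_comm, Nat.add_mul_div_right _ _ (by omega), Nat.div_eq_of_lt hu, zero_add]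

lemma copyPos_mod {c u : ℕ} (hu : u < L.n) : (c * L.n + u) % L.n = u := by
  rw [Nat.add_comm, Nat.add_mul_mod_self_right, Nat.mod_eq_of_lt hu]

lemma copyPos_inj {c d u v : ℕ} (hu : u < L.n) (hv : v < L.n)
    (h : T.copyPos L c u = T.copyPos L d v) : c = d ∧ u = v := by
  have h' : c * L.n + u = d * L.n + v := by unfold copyPos at h; omega
  exact ⟨by rw [← copyPos_div (c := c) hu, h', copyPos_div hv],
    by rw [← copyPos_mod (c := c) hu, h', copyPos_mod hv]⟩

lemma le_copyPos {c u : ℕ} : T.n ≤ T.copyPos L c u := Nat.le_add_right _ _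

lemma copyPos_lt {m c u : ℕ} (hc : c < m) (hu : u < L.n) : T.copyPos L c u < T.n + m * L.n := by
  have : c * L.n + L.n ≤ m * L.n := by nlinarith
  unfold copyPos; omega

lemma exists_eq_copyPos {m i : ℕ} (h₁ : T.n ≤ i) (h₂ : i < T.n + m * L.n) :
    ∃ c < m, ∃ u < L.n, i = T.copyPos L c u := by
  have hL : 0 < L.n := Nat.pos_of_ne_zero fun h => by simp [h] at h₂; omega
  refine ⟨(i - T.n) / L.n, Nat.div_lt_of_lt_mul (by rw [Nat.mul_comm]; omega),
    (i - T.n) % L.n, Nat.mod_lt _ hL, ?_⟩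
  have := Nat.div_add_mod' (i - T.n) L.n
  unfold copyPos; omega

namespace Gluing

variable {m : ℕ} (A : Gluing T L m)

def B (i : ℕ) : Finset ℕ :=
  if i < T.n then T.B i else
    A.K ((i - T.n) / L.n) ((i - T.n) % L.n) ∪
      (L.B ((i - T.n) % L.n)).image (T.copyPos L ((i - T.n) / L.n))

lemma B_of_lt {i : ℕ} (hi : i < T.n) : A.B i = T.B i := if_pos hi

lemma B_copyPos {c u : ℕ} (hu : u < L.n) :
    A.B (T.copyPos L c u) = A.K c u ∪ (L.B u).image (T.copyPos L c) := by
  have h : T.copyPos L c u - T.n = c * L.n + u := by unfold copyPos; omega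
  rw [B, if_neg (by unfold copyPos; omega), h, copyPos_div hu, copyPos_mod hu]

lemma lt_of_mem_B_copyPos {c u j : ℕ} (hc : c < m) (hu : u < L.n)
    (hj : j ∈ A.B (T.copyPos L c u)) : j < T.copyPos L c u := by
  rw [A.B_copyPos hu, mem_union, mem_image] at hj
  rcases hj with hj | ⟨x, hx, rfl⟩
  · have := A.lt_of_mem_K c hc u j hj
    unfold copyPos; omega
  · have := L.lt_of_mem_B u hu x hx
    unfold copyPos; omega

lemma card_B_copyPos {c u : ℕ} (hc : c < m) (hu : u < L.n) : #(A.B (T.copyPos L c u)) = t := by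
  have hdisj : Disjoint (A.K c u) ((L.B u).image (T.copyPos L c)) := by
    refine disjoint_left.2 fun j hj hj' => ?_
    obtain ⟨x, -, rfl⟩ := mem_image.1 hj'
    have := A.lt_of_mem_K c hc u _ hj
    unfold copyPos at this; omega
  rw [A.B_copyPos hu, card_union_of_disjoint hdisj,
    card_image_of_injective _ fun x y h => by unfold copyPos at h; omega, L.card_B u hu,
    A.card_K c hc u]

lemma mem_B_of_mem_B_copyPos {c u j j' : ℕ} (hc : c < m) (hu : u < L.n)
    (hj : j ∈ A.B (T.copyPos L c u)) (hj' : j' ∈ A.B (T.copyPos L c u)) (hjj' : j < j') :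
    j ∈ A.B j' := by
  rw [A.B_copyPos hu, mem_union, mem_image] at hj hj'
  rcases hj' with hj' | ⟨y, hy, rfl⟩
  · have hj'T := A.lt_of_mem_K c hc u j' hj'
    rw [A.B_of_lt hj'T]
    rcases hj with hj | ⟨x, -, rfl⟩
    · exact A.isClique_K c hc u j hj j' hj' hjj'
    · unfold copyPos at hjj'; omega
  · have hyu := L.lt_of_mem_B u hu y hy
    rw [A.B_copyPos (hyu.trans hu), mem_union, mem_image]
    rcases hj with hj | ⟨x, hx, rfl⟩
    · exact Or.inl (A.K_anti c hc u y hyu hj)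
    · have hxy : x < y := by unfold copyPos at hjj'; omega
      exact Or.inr ⟨x, L.mem_B_of_mem_B u hu x hx y hy hxy, rfl⟩

def glue : TTreeLayout t where
  n := T.n + m * L.n
  B := A.B
  lt_of_mem_B i hi j hj := by
    by_cases hiT : i < T.n
    · rw [A.B_of_lt hiT] at hj
      exact T.lt_of_mem_B i hiT j hj
    · obtain ⟨c, hc, u, hu, rfl⟩ := exists_eq_copyPos (by omega) hi
      exact A.lt_of_mem_B_copyPos hc hu hj
  card_B i hi := by
    by_cases hiT : i < T.n
    · rw [A.B_of_lt hiT, T.card_B i hiT]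
    · obtain ⟨c, hc, u, hu, rfl⟩ := exists_eq_copyPos (by omega) hi
      rw [A.card_B_copyPos hc hu, min_eq_right (by have := A.le_n; unfold copyPos; omega)]
  mem_B_of_mem_B i hi j hj j' hj' hjj' := by
    by_cases hiT : i < T.n
    · rw [A.B_of_lt hiT] at hj hj'
      rw [A.B_of_lt ((T.lt_of_mem_B i hiT j' hj').trans hiT)]
      exact T.mem_B_of_mem_B i hiT j hj j' hj' hjj'
    · obtain ⟨c, hc, u, hu, rfl⟩ := exists_eq_copyPos (by omega) hi
      exact A.mem_B_of_mem_B_copyPos hc hu hj hj' hjj'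

lemma glue_B : A.glue.B = A.B := rfl

lemma mem_B_copyPos_of_mem_K {c u j : ℕ} (hu : u < L.n) (hj : j ∈ A.K c u) :
    j ∈ A.glue.B (T.copyPos L c u) := by
  rw [glue_B, A.B_copyPos hu]
  exact mem_union_left _ hj

lemma hosts_copy {V : Type} {H : SimpleGraph V} {g : V → ℕ} (hg : L.Hosts H g) (c : ℕ) {x y : V}
    (hxy : H.Adj x y) (h : T.copyPos L c (g x) < T.copyPos L c (g y)) :
    T.copyPos L c (g x) ∈ A.glue.B (T.copyPos L c (g y)) := by
  rw [glue_B, A.B_copyPos (hg.2.1 y)]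
  exact mem_union_right _ (mem_image_of_mem _ (hg.2.2 x y hxy (by unfold copyPos at h; omega)))

end Gluing

/-- Places `L` after `T` as a disjoint union, completing the backward sets of the first `t`
vertices of `L` from the clique on the first `t` positions of `T`. -/
def sumGluing (T L : TTreeLayout t) (hT : t ≤ T.n) : Gluing T L 1 where
  le_n := hT
  K _ u := range (t - min u t)
  lt_of_mem_K _ _ u j hj := by rw [mem_range] at hj; omega
  isClique_K _ _ u := (T.isClique_range hT).subset (range_subset_range.2 (Nat.sub_le _ _))
  K_anti _ _ u y hyu := range_subset_range.2 (by omega)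
  card_K _ _ u := by rw [card_range]; omega

theorem Hosts.sum {V₁ V₂ : Type} {G₁ : SimpleGraph V₁} {G₂ : SimpleGraph V₂} {T L : TTreeLayout t}
    {f₁ : V₁ → ℕ} {f₂ : V₂ → ℕ} (h₁ : T.Hosts G₁ f₁) (h₂ : L.Hosts G₂ f₂) (hT : t ≤ T.n) :
    (sumGluing T L hT).glue.Hosts (G₁ ⊕g G₂) (Sum.elim f₁ (T.copyPos L 0 ∘ f₂)) := by
  obtain ⟨hinj₁, hlt₁, hadj₁⟩ := h₁
  have hlt₂ := h₂.2.1
  refine ⟨?_, ?_, ?_⟩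
  · rintro (a | a) (b | b) h <;> simp only [Sum.elim_inl, Sum.elim_inr, Function.comp_apply] at h
    · rw [hinj₁ h]
    · have := hlt₁ a; unfold copyPos at h; omega
    · have := hlt₁ b; unfold copyPos at h; omega
    · rw [h₂.1 (copyPos_inj (hlt₂ a) (hlt₂ b) h).2]
  · rintro (a | a)
    · exact (hlt₁ a).trans_le (Nat.le_add_right _ _)
    · exact copyPos_lt zero_lt_one (hlt₂ a)
  · rintro (a | a) (b | b) hab h <;>
      simp only [Sum.elim_inl, Sum.elim_inr, Function.comp_apply, SimpleGraph.sum_adj_inl,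
        SimpleGraph.sum_adj_inr, SimpleGraph.not_adj_sum_inl_inr] at hab h ⊢
    · rw [Gluing.glue_B, Gluing.B_of_lt _ (hlt₁ b)]
      exact hadj₁ a b hab h
    · exact absurd hab (by simp)
    · exact Gluing.hosts_copy _ h₂ 0 hab h

def skip (c x : ℕ) : ℕ := if x < c then x else x + 1

lemma skip_ne (c x : ℕ) : skip c x ≠ c := by unfold skip; split <;> omega

lemma skip_le (c x : ℕ) : skip c x ≤ x + 1 := by unfold skip; split <;> omega

lemma skip_injective (c : ℕ) : Function.Injective (skip c) := by
  intro x y h; unfold skip at h; split at h <;> split at h <;> omega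

/-- Gluing `n ≤ t' + 2` copies of `L` onto the clique on `t' + 3` positions, copy `c` along the
edge between position `c` and the last position `t' + 2`; the missing backward neighbours of the
first `t'` vertices of each copy are taken from the clique, avoiding `c`. -/
def stepGluing (L : TTreeLayout t') (n : ℕ) (hn : n ≤ t' + 2) :
    Gluing (completeSplit (t' + 2) (t' + 3)) L n where
  le_n := Nat.le_succ _
  K c u := insert c (insert (t' + 2) ((range (t' - min u t')).image (skip c)))
  lt_of_mem_K c hc u j hj := by
    simp only [mem_insert, mem_image, mem_range] at hj
    rcases hj with rfl | rfl | ⟨x, hx, rfl⟩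
    · exact hc.trans_le (by simp [completeSplit]; omega)
    · simp [completeSplit]
    · have := skip_le c x
      simp only [completeSplit]; omega
  isClique_K c hc u := (completeSplit_isClique_range _).subset fun j hj => by
    simp only [mem_insert, mem_image, mem_range] at hj ⊢
    rcases hj with rfl | rfl | ⟨x, hx, rfl⟩
    · omega
    · omega
    · have := skip_le c x; omega
  K_anti c _ u y hyu := insert_subset_insert _ (insert_subset_insert _
    (image_subset_image (range_subset_range.2 (by omega))))
  card_K c hc u := by
    have hskip : ∀ x ∈ range (t' - min u t'), skip c x < t' + 2 := fun x hx => by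
      have := skip_le c x; rw [mem_range] at hx; omega
    rw [card_insert_of_notMem, card_insert_of_notMem, card_image_of_injective _ (skip_injective c),
      card_range]
    · omega
    · intro h
      obtain ⟨x, hx, hxe⟩ := mem_image.1 h
      exact (hskip x hx).ne hxe
    · simp only [mem_insert, mem_image, not_or, not_exists, not_and]
      exact ⟨by omega, fun x _ => skip_ne c x⟩

end TTreeLayout

section Step

variable {α : Type} {n : ℕ} {H : SimpleGraph α}

/-- `n` pairwise adjacent cores `some (c, none)`, a hub `none`, and for each core `c` a copy
`some (c, some x)` of `H` whose vertices are joined to core `c` and to the hub. -/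
def stepGraph (n : ℕ) (H : SimpleGraph α) : SimpleGraph (Option (Fin n × Option α)) :=
  SimpleGraph.fromRel fun a b => match a, b with
    | none, some (_, some _) => True
    | some (_, none), some (_, none) => True
    | some (c, none), some (d, some _) => c = d
    | some (c, some x), some (d, some y) => c = d ∧ H.Adj x y
    | _, _ => False

@[simp] lemma stepGraph_adj_hub_core (c : Fin n) : ¬ (stepGraph n H).Adj none (some (c, none)) := by
  simp [stepGraph]

@[simp] lemma stepGraph_adj_core_core (c d : Fin n) :
    (stepGraph n H).Adj (some (c, none)) (some (d, none)) ↔ c ≠ d := by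
  simp [stepGraph]

@[simp] lemma stepGraph_adj_core_child (c d : Fin n) (x : α) :
    (stepGraph n H).Adj (some (c, none)) (some (d, some x)) ↔ c = d := by
  simp [stepGraph]

@[simp] lemma stepGraph_adj_child_child (c d : Fin n) (x y : α) :
    (stepGraph n H).Adj (some (c, some x)) (some (d, some y)) ↔ c = d ∧ H.Adj x y := by
  simp only [stepGraph, SimpleGraph.fromRel_adj, ne_eq, Option.some.injEq, Prod.mk.injEq,
    not_and]
  constructor
  · rintro ⟨-, h | ⟨rfl, h⟩⟩
    exacts [h, ⟨rfl, h.symm⟩]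
  · rintro ⟨rfl, h⟩
    exact ⟨fun _ => H.ne_of_adj h, Or.inl ⟨rfl, h⟩⟩

@[simp] lemma stepGraph_adj_hub_child (c : Fin n) (x : α) :
    (stepGraph n H).Adj none (some (c, some x)) := by
  simp [stepGraph]

variable {p : ℕ}

lemma stepGraph_card_le_of_child_mem (hH : ∀ S : Finset α, H.IsClique (S : Set α) → #S ≤ p)
    {S : Finset (Option (Fin n × Option α))} (hS : (stepGraph n H).IsClique (S : Set _))
    {c : Fin n} {x : α} (hx : some (c, some x) ∈ S) : #S ≤ p + 1 := by
  classical
  set Sc := S.preimage (fun y => some (c, some y)) (by intro _ _ _ _ h; simpa using h)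
  have hmem : ∀ y, y ∈ Sc ↔ some (c, some y) ∈ S := fun y => Finset.mem_preimage
  have hSc : H.IsClique (Sc : Set α) := fun y hy y' hy' hyy' => by
    rw [mem_coe, hmem] at hy hy'
    exact ((stepGraph_adj_child_child c c y y').1 (hS hy hy' (by simpa using hyy'))).2
  set a : Option (Fin n × Option α) := if none ∈ S then none else some (c, none)
  have hsub : S ⊆ insert a (Sc.image fun y => some (c, some y)) := by
    intro v hv
    have hadj : v ≠ some (c, some x) → (stepGraph n H).Adj v (some (c, some x)) :=
      hS hv hx
    rcases v with _ | ⟨d, _ | y⟩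
    · simp [a, hv]
    · have hd : d = c := (stepGraph_adj_core_child d c x).1 (hadj (by simp))
      subst hd
      have : none ∉ S := fun h => stepGraph_adj_hub_core d (hS h hv (by simp))
      simp [a, this]
    · by_cases hy : d = c ∧ y = x
      · obtain ⟨rfl, rfl⟩ := hy
        simp [hmem, hv]
      · have hd : d = c := ((stepGraph_adj_child_child d c y x).1 (hadj (by simpa using hy))).1
        subst hd
        simp [hmem, hv]
  calc #S ≤ #(insert a (Sc.image fun y => some (c, some y))) := card_le_card hsub
    _ ≤ #Sc + 1 := (card_insert_le _ _).trans (by gcongr; exact card_image_le)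
    _ ≤ p + 1 := by gcongr; exact hH Sc hSc

lemma stepGraph_card_le_of_no_child (hn : n ≤ p + 1) {S : Finset (Option (Fin n × Option α))}
    (hS : (stepGraph n H).IsClique (S : Set _)) (hch : ∀ c x, some (c, some x) ∉ S) :
    #S ≤ p + 1 := by
  classical
  by_cases hhub : none ∈ S
  · have : S ⊆ {none} := by
      intro v hv
      rcases v with _ | ⟨d, _ | y⟩
      · simp
      · exact absurd (hS hhub hv (by simp)) (stepGraph_adj_hub_core d)
      · exact absurd hv (hch d y)
    exact (card_le_card this).trans (by simp)
  · have : S ⊆ univ.image fun c : Fin n => some (c, none) := by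
      intro v hv
      rcases v with _ | ⟨d, _ | y⟩
      · exact absurd hv hhub
      · simp
      · exact absurd hv (hch d y)
    calc #S ≤ _ := card_le_card this
      _ ≤ n := card_image_le.trans (by simp)
      _ ≤ p + 1 := hn

lemma stepGraph_card_le_of_isClique (hH : ∀ S : Finset α, H.IsClique (S : Set α) → #S ≤ p)
    (hn : n ≤ p + 1) (S : Finset (Option (Fin n × Option α)))
    (hS : (stepGraph n H).IsClique (S : Set _)) : #S ≤ p + 1 := by
  by_cases hch : ∃ c x, some (c, some x) ∈ S
  · obtain ⟨c, x, hx⟩ := hch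
    exact stepGraph_card_le_of_child_mem hH hS hx
  · push Not at hch
    exact stepGraph_card_le_of_no_child hn hS hch

lemma stepGraph_isNClique_cores :
    (stepGraph n H).IsNClique n (univ.map ⟨fun c : Fin n => some (c, none), by
      intro _ _ h; simpa using h⟩) := by
  refine ⟨?_, by simp⟩
  intro u hu v hv huv
  simp only [coe_map, coe_univ, Set.image_univ, Set.mem_range] at hu hv
  obtain ⟨c, rfl⟩ := hu
  obtain ⟨d, rfl⟩ := hv
  exact (stepGraph_adj_core_core c d).2 fun h => huv (h ▸ rfl)

section Weights

variable [Fintype α] {w : α → ℝ}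

noncomputable def stepWeight (n : ℕ) (w : α → ℝ) : Option (Fin n × Option α) → ℝ
  | none => 1 - 1 / n
  | some (_, none) => 1 / n
  | some (_, some x) => w x / n

lemma sum_stepWeight (hn : 0 < n) : ∑ v, stepWeight n w v = ∑ x, w x + 2 - 1 / (n : ℝ) := by
  simp only [Fintype.sum_option, Fintype.sum_prod_type, stepWeight, sum_const, card_univ,
    Fintype.card_fin, nsmul_eq_mul, ← sum_div, sum_const]
  field_simp
  ring

lemma sum_stepWeight_eq [DecidableEq α] (S : Finset (Option (Fin n × Option α))) :
    ∑ v ∈ S, stepWeight n w v = (if none ∈ S then 1 - 1 / (n : ℝ) else 0) +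
      ∑ c, ((if some (c, none) ∈ S then 1 / (n : ℝ) else 0) +
        ∑ x, if some (c, some x) ∈ S then w x / n else 0) := by
  rw [← univ_inter S, ← sum_ite_mem, Fintype.sum_option, Fintype.sum_prod_type]
  simp [Fintype.sum_option, stepWeight]

section Blocks

variable [DecidableEq α] {S : Finset (Option (Fin n × Option α))}

lemma stepWeight_block_le (hw : H.IsFracClique w) (hS : (stepGraph n H).IsIndepSet (S : Set _))
    (c : Fin n) : (if some (c, none) ∈ S then 1 / (n : ℝ) else 0) +
      ∑ x, (if some (c, some x) ∈ S then w x / n else 0) ≤ (1 / n : ℝ) := by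
  by_cases hc : some (c, none) ∈ S
  · have hchild : ∀ x, some (c, some x) ∉ S := fun x hx =>
      hS hc hx (by simp) ((stepGraph_adj_core_child c c x).2 rfl)
    simp [hc, hchild]
  · have hind : H.IsIndepSet (({x | some (c, some x) ∈ S} : Finset α) : Set α) :=
      fun x hx y hy hxy hadj => by
        simp only [coe_filter, mem_univ, true_and, Set.mem_ofPred_eq] at hx hy
        exact hS hx hy (by simpa using hxy) ((stepGraph_adj_child_child c c x y).2 ⟨rfl, hadj⟩)
    rw [if_neg hc, zero_add, ← sum_filter, ← sum_div]
    exact div_le_div_of_nonneg_right (hw.2 _ hind) (Nat.cast_nonneg n)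

lemma stepWeight_blocks_le_of_hub (hS : (stepGraph n H).IsIndepSet (S : Set _)) (hhub : none ∈ S) :
    ∑ c, ((if some (c, none) ∈ S then 1 / (n : ℝ) else 0) +
      ∑ x, (if some (c, some x) ∈ S then w x / n else 0)) ≤ (1 / n : ℝ) := by
  have hchild : ∀ c x, some (c, some x) ∉ S := fun c x hx =>
    hS hhub hx (by simp) (stepGraph_adj_hub_child c x)
  have hcores : #({c | some (c, none) ∈ S} : Finset (Fin n)) ≤ 1 :=
    card_le_one.2 fun c hc d hd => by
      by_contra hcd
      simp only [mem_filter, mem_univ, true_and] at hc hd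
      exact hS hc hd (by simpa using hcd) ((stepGraph_adj_core_core c d).2 hcd)
  simp only [hchild, if_false, sum_const_zero, add_zero]
  rw [← sum_filter, sum_const, nsmul_eq_mul]
  calc _ ≤ (1 : ℝ) * (1 / n) := by gcongr; exact_mod_cast hcores
    _ = 1 / n := one_mul _

end Blocks

theorem SimpleGraph.IsFracClique.stepGraph (hw : H.IsFracClique w) (hn : 0 < n) :
    (stepGraph n H).IsFracClique (stepWeight n w) := by
  classical
  have hn' : (1 : ℝ) ≤ n := by exact_mod_cast hn
  refine ⟨fun v => ?_, fun S hS => ?_⟩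
  · rcases v with _ | ⟨c, _ | x⟩ <;> simp only [stepWeight]
    · rw [sub_nonneg, div_le_one (by positivity)]; exact hn'
    · positivity
    · exact div_nonneg (hw.1 x) (Nat.cast_nonneg n)
  rw [sum_stepWeight_eq]
  by_cases hhub : none ∈ S
  · rw [if_pos hhub]
    linarith [stepWeight_blocks_le_of_hub (w := w) hS hhub]
  · rw [if_neg hhub, zero_add]
    calc _ ≤ ∑ _c : Fin n, (1 / n : ℝ) := sum_le_sum fun c _ => stepWeight_block_le hw hS c
      _ = 1 := by simp; field_simp

end Weights

open TTreeLayout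

variable {t' : ℕ}

def stepPos (L : TTreeLayout t') (g : α → ℕ) : Option (Fin n × Option α) → ℕ
  | none => t' + 2
  | some (c, none) => c
  | some (c, some x) => (completeSplit (t' + 2) (t' + 3)).copyPos L c (g x)

lemma stepPos_injective {L : TTreeLayout t'} {g : α → ℕ} (hg : L.Hosts H g) (hn : n ≤ t' + 2) :
    Function.Injective (stepPos (n := n) L g) := by
  have hc : ∀ c : Fin n, (c : ℕ) < t' + 2 := fun c => c.2.trans_le hn
  have hcopy : ∀ (c : Fin n) x, t' + 2 < (completeSplit (t' + 2) (t' + 3)).copyPos L c x :=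
    fun _ _ => Nat.lt_of_succ_le (le_copyPos (T := completeSplit (t' + 2) (t' + 3)))
  rintro (_ | ⟨c, _ | x⟩) (_ | ⟨d, _ | y⟩) h <;> simp only [stepPos] at h
  · rfl
  · exact absurd h (hc d).ne'
  · exact absurd h (hcopy d (g y)).ne
  · exact absurd h (hc c).ne
  · rw [Fin.ext h]
  · exact absurd h ((hc c).trans (hcopy d (g y))).ne
  · exact absurd h (hcopy c (g x)).ne'
  · exact absurd h ((hc d).trans (hcopy c (g x))).ne'
  · obtain ⟨hcd, h⟩ := copyPos_inj (hg.2.1 x) (hg.2.1 y) h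
    rw [Fin.ext hcd, hg.1 h]

theorem TTreeLayout.Hosts.stepGraph {L : TTreeLayout t'} {g : α → ℕ} (hg : L.Hosts H g)
    (hn : n ≤ t' + 2) : (stepGluing L n hn).glue.Hosts (stepGraph n H) (stepPos L g) := by
  set A := stepGluing L n hn
  have hc : ∀ c : Fin n, (c : ℕ) < t' + 2 := fun c => c.2.trans_le hn
  have hcopy : ∀ (c : Fin n) x, t' + 2 < (completeSplit (t' + 2) (t' + 3)).copyPos L c x :=
    fun _ _ => Nat.lt_of_succ_le (le_copyPos (T := completeSplit (t' + 2) (t' + 3)))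
  have hbase : ∀ p q, p < q → q ≤ t' + 2 → p ∈ A.glue.B q := fun p q hpq hq => by
    rw [Gluing.glue_B, Gluing.B_of_lt _ (by simp [completeSplit]; omega)]
    simp only [completeSplit, mem_range, lt_min_iff]
    omega
  refine ⟨stepPos_injective hg hn, ?_, ?_⟩
  · have hT : t' + 3 ≤ A.glue.n := Nat.le_add_right _ _
    rintro (_ | ⟨c, _ | x⟩) <;> simp only [stepPos]
    · omega
    · exact (hc c).trans (by omega)
    · exact copyPos_lt c.2 (hg.2.1 x)
  · rintro (_ | ⟨c, _ | x⟩) (_ | ⟨d, _ | y⟩) huv h <;> simp only [stepPos] at h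
    · exact absurd huv (SimpleGraph.irrefl _)
    · exact absurd huv (stepGraph_adj_hub_core d)
    · exact A.mem_B_copyPos_of_mem_K (hg.2.1 y) (mem_insert_of_mem (mem_insert_self _ _))
    · exact hbase _ _ h le_rfl
    · exact hbase _ _ h (hc d).le
    · obtain rfl := (stepGraph_adj_core_child c d y).1 huv
      exact A.mem_B_copyPos_of_mem_K (hg.2.1 y) (mem_insert_self _ _)
    · exact absurd h (hcopy c (g x)).not_gt
    · exact absurd h ((hc d).trans (hcopy c (g x))).not_gt
    · obtain ⟨rfl, hxy⟩ := (stepGraph_adj_child_child c d x y).1 huv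
      exact A.hosts_copy hg c hxy h

end Step

abbrev GadgetVertex : ℕ → ℕ → Type
  | 0, m => Fin m
  | k + 1, m => Option (Fin (m + k + 1) × Option (GadgetVertex k m))

instance GadgetVertex.instFintype : (k m : ℕ) → Fintype (GadgetVertex k m)
  | 0, m => inferInstanceAs (Fintype (Fin m))
  | k + 1, m =>
    have := GadgetVertex.instFintype k m
    inferInstanceAs (Fintype (Option _))

/-- A graph of clique number `m + k` and treewidth `m + 2k - 1`. -/
def gadget : (k m : ℕ) → SimpleGraph (GadgetVertex k m)
  | 0, _ => ⊤
  | k + 1, m => stepGraph (m + k + 1) (gadget k m)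

noncomputable def gadgetWeight : (k m : ℕ) → GadgetVertex k m → ℝ
  | 0, _ => 1
  | k + 1, m => stepWeight (m + k + 1) (gadgetWeight k m)

lemma card_le_of_isClique_gadget :
    ∀ k m (S : Finset (GadgetVertex k m)), (gadget k m).IsClique (S : Set _) → #S ≤ m + k
  | 0, m, S, _ => (card_le_univ S).trans (Fintype.card_fin m).le
  | k + 1, m, S, hS =>
    stepGraph_card_le_of_isClique (card_le_of_isClique_gadget k m) le_rfl S hS

lemma isFracClique_gadgetWeight : ∀ k m, (gadget k m).IsFracClique (gadgetWeight k m)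
  | 0, m => SimpleGraph.isFracClique_top m
  | k + 1, m => (isFracClique_gadgetWeight k m).stepGraph (Nat.succ_pos _)

lemma sum_gadgetWeight :
    ∀ k m, ∑ v, gadgetWeight k m v = m + 2 * k - ∑ i ∈ range k, 1 / ((m + i + 1 : ℕ) : ℝ)
  | 0, m => by simp [gadgetWeight]
  | k + 1, m => by
    rw [gadgetWeight, sum_stepWeight (Nat.succ_pos _), sum_gadgetWeight k m, sum_range_succ]
    push_cast
    ring

theorem exists_hosts_gadget :
    ∀ k m, ∃ T : TTreeLayout (m + 2 * k - 1), ∃ f, T.Hosts (gadget k m) f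
  | 0, _ => ⟨_, TTreeLayout.completeSplit_hosts_of_card_le _ (by simp; omega)⟩
  | k + 1, m => by
    -- the width `m + 2 * k - 1` of the empty `gadget 0 0` truncates: place `gadget 1 0` directly
    by_cases hmk : m + k = 0
    · obtain ⟨rfl, rfl⟩ : m = 0 ∧ k = 0 := by omega
      exact ⟨_, TTreeLayout.completeSplit_hosts_of_card_le _ (by simp)⟩
    obtain ⟨L, g, hg⟩ := exists_hosts_gadget k m
    rw [show m + 2 * (k + 1) - 1 = m + 2 * k - 1 + 2 by omega]
    have hn : m + k + 1 ≤ m + 2 * k - 1 + 2 := by omega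
    exact ⟨_, _, hg.stepGraph hn⟩

open SimpleGraph

lemma top_isContained_gadget (k m : ℕ) :
    completeGraph (Fin (m + k + 1)) ⊑ gadget (k + 1) m :=
  (not_cliqueFree_iff_top_isContained _).1 stepGraph_isNClique_cores.not_cliqueFree

lemma cliqueFree_completeBipartiteGraph_sum_gadget (t k m : ℕ) (h : 1 ≤ m + k) :
    (completeBipartiteGraph (Fin t) (Fin t) ⊕g gadget (k + 1) m).CliqueFree (m + k + 1 + 1) := by
  refine cliqueFree_of_card_le (card_le_of_isClique_sum (fun S hS => ?_) (fun S hS => ?_))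
  · exact (hS.card_le_of_colorable (CompleteBipartiteGraph.bicoloring _ _).colorable).trans
      (by simp; omega)
  · exact card_le_of_isClique_gadget (k + 1) m S hS

lemma ofReal_le_fracChromNum_gadget (k m : ℕ) :
    ENNReal.ofReal (m + 2 * k - ∑ i ∈ range k, 1 / ((m + i + 1 : ℕ) : ℝ)) ≤
      fracChromNum (gadget k m) :=
  sum_gadgetWeight k m ▸ (isFracClique_gadgetWeight k m).ofReal_sum_le_fracChromNum

theorem treewidthAtMost_completeBipartiteGraph_sum_gadget {t k m : ℕ} (ht : m + 2 * k - 1 = t) :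
    TreewidthAtMost (completeBipartiteGraph (Fin t) (Fin t) ⊕g gadget k m) t := by
  subst ht
  obtain ⟨T, f, hf⟩ := exists_hosts_gadget k m
  have hK : _ ≤ (TTreeLayout.completeSplit (m + 2 * k - 1) (2 * (m + 2 * k - 1))).n :=
    Nat.le_mul_of_pos_left _ two_pos
  exact ((TTreeLayout.completeSplit_hosts_completeBipartiteGraph _).sum hf hK).treewidthAtMost
    (hK.trans (Nat.le_add_right _ _))

lemma exists_isNClique_of_top_isContained {V : Type} {G : SimpleGraph V} {n : ℕ}
    (h : completeGraph (Fin n) ⊑ G) : ∃ S, G.IsNClique n S := by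
  simpa [CliqueFree] using (not_cliqueFree_iff_top_isContained n).2 h

lemma sum_Icc_one_div_sub (ω p : ℕ) (h : p ≤ ω) :
    ∑ i ∈ Icc 1 p, 1 / ((ω + 1 - i : ℕ) : ℝ) = ∑ i ∈ range p, 1 / ((ω - p + i + 1 : ℕ) : ℝ) := by
  refine sum_nbij' (fun i => p - i) (fun i => p - i) ?_ ?_ ?_ ?_ ?_ <;>
    intro i hi <;> simp only [mem_Icc, mem_range] at hi ⊢
  all_goals first | omega | (congr 3; omega)

theorem frac_chrom_harmonic_lower_bound_general (t ω : ℕ) (hω2 : 2 ≤ ω) (hωt : ω ≤ t)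
    (h2 : t + 1 ≤ 2 * ω) :
    ∃ (n : ℕ) (G : SimpleGraph (Fin n)),
      TreewidthAtMost G t ∧ (∀ s : ℕ, TreewidthAtMost G s → t ≤ s) ∧
      (∃ S : Finset (Fin n), G.IsNClique ω S) ∧ G.CliqueFree (ω + 1) ∧
      ENNReal.ofReal ((t : ℝ) + 1 -
          ∑ i ∈ Finset.Icc 1 (t - ω + 1), (1 : ℝ) / ((ω + 1 - i : ℕ) : ℝ)) ≤
        fracChromNum G := by
  obtain ⟨k, m, hk, rfl⟩ : ∃ k m, t - ω = k ∧ ω = m + k + 1 := ⟨_, ω - (t - ω + 1), rfl, by omega⟩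
  set U := completeBipartiteGraph (Fin t) (Fin t) ⊕g gadget (k + 1) m
  have e := U.overFinIso rfl
  refine ⟨_, U.overFin rfl,
    (treewidthAtMost_completeBipartiteGraph_sum_gadget (by omega)).comap ⟨e.symm.toCopy⟩,
    fun s hs => le_of_treewidthAtMost_completeBipartiteGraph
      (hs.comap ⟨e.toCopy.comp Embedding.sumInl.toCopy⟩),
    exists_isNClique_of_top_isContained ((top_isContained_gadget k m).trans
      ⟨e.toCopy.comp Embedding.sumInr.toCopy⟩),
    (cliqueFree_completeBipartiteGraph_sum_gadget t k m (by omega)).comap ⟨e.symm.toCopy⟩, ?_⟩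
  calc _ = ENNReal.ofReal
        (m + 2 * ((k + 1 : ℕ) : ℝ) - ∑ i ∈ range (k + 1), 1 / ((m + i + 1 : ℕ) : ℝ)) := by
        rw [hk, sum_Icc_one_div_sub _ _ (by omega), show m + k + 1 - (k + 1) = m by omega]
        congr 2
        exact_mod_cast (by omega : t + 1 = m + 2 * (k + 1))
    _ ≤ fracChromNum (gadget (k + 1) m) := ofReal_le_fracChromNum_gadget (k + 1) m
    _ ≤ fracChromNum U := fracChromNum_le_of_hom Embedding.sumInr.toHom
    _ ≤ _ := fracChromNum_le_of_hom e.toHom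

/-- For `t ≥ 2` and `(t+1)/2 ≤ ω ≤ t` with `ω ≥ 2`, there is a graph of
treewidth exactly `t` and clique number exactly `ω` with
`χ_f(G) ≥ t + 1 - ∑_{i=1}^{t-ω+1} 1/(ω - i + 1)`. -/
theorem frac_chrom_harmonic_lower_bound (t ω : ℕ) (ht : 2 ≤ t) (hω2 : 2 ≤ ω) (hωt : ω ≤ t)
    (h2 : t + 1 ≤ 2 * ω) :
    ∃ (n : ℕ) (G : SimpleGraph (Fin n)),
      TreewidthAtMost G t ∧ (∀ s : ℕ, TreewidthAtMost G s → t ≤ s) ∧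
      (∃ S : Finset (Fin n), G.IsNClique ω S) ∧ G.CliqueFree (ω + 1) ∧
      ENNReal.ofReal ((t : ℝ) + 1 -
          ∑ i ∈ Finset.Icc 1 (t - ω + 1), (1 : ℝ) / ((ω + 1 - i : ℕ) : ℝ)) ≤
        fracChromNum G :=
  frac_chrom_harmonic_lower_bound_general t ω hω2 hωt h2
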